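/- arXiv:1709.06694 — 3 statements merged into one kernel-verified Lean document; each statement's English description precedes it below -/
import Mathlib

section
/- Let E and E_h be closed subspaces of a Hilbert space 𝒱 with orthogonal projections S and P (onto E and E_h respectively). If the quantity δ := sup_{e ∈ E, ‖e‖=1} dist(e, E_h) satisfies δ < 1 and dim E_h = dim E = m < ∞, then gap_𝒱(E, E_h) = δ, where gap_𝒱(M,L) = max( sup_{m∈M,‖m‖=1} dist(m,L), sup_{l∈L,‖l‖=1} dist(l,M) ). -/
/-! If every unit vector of `E` lies within `δ < 1` of `F`, then `‖P_F x‖² ≥ (1 - δ²) ‖x‖²` on `E`,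
so `P_F : E → F` is injective and, the dimensions being equal, onto. For `f = P_F x`,
self-adjointness of the projections gives `‖f‖² = ⟪x, P_E f⟫ ≤ ‖x‖ ‖P_E f‖`; together with the
first bound this yields `‖P_E f‖² ≥ (1 - δ²) ‖f‖²`, that is `dist(f, E) ≤ δ ‖f‖` by Pythagoras.
So the gap from `F` to `E` is at most `δ`. -/

open Metric

namespace Submodule

variable {𝕜 V : Type*} [RCLike 𝕜] [NormedAddCommGroup V] [InnerProductSpace 𝕜 V]

section Projection

variable (K : Submodule 𝕜 V) [K.HasOrthogonalProjection]

theorem infDist_eq_norm_sub_starProjection (x : V) :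
    infDist x K = ‖x - K.starProjection x‖ := by
  have : Nonempty K := ⟨0⟩
  rw [starProjection_minimal, infDist_eq_iInf]
  simp only [dist_eq_norm]
  rfl

theorem norm_sq_eq_norm_starProjection_sq_add_infDist_sq (x : V) :
    ‖x‖ ^ 2 = ‖K.starProjection x‖ ^ 2 + infDist x K ^ 2 := by
  rw [K.norm_sq_eq_add_norm_sq_starProjection x, infDist_eq_norm_sub_starProjection,
    starProjection_orthogonal_val]

theorem infDist_smul (c : 𝕜) (x : V) : infDist (c • x) K = ‖c‖ * infDist x K := by
  simp only [infDist_eq_norm_sub_starProjection, map_smul, ← smul_sub, norm_smul]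

theorem infDist_le_mul_norm_of_sq_le {δ : ℝ} (hδ : 0 ≤ δ) {x : V}
    (hx : (1 - δ ^ 2) * ‖x‖ ^ 2 ≤ ‖K.starProjection x‖ ^ 2) :
    infDist x K ≤ δ * ‖x‖ := by
  have := K.norm_sq_eq_norm_starProjection_sq_add_infDist_sq x
  exact pow_le_pow_iff_left₀ infDist_nonneg (by positivity) two_ne_zero |>.mp (by nlinarith)

end Projection

noncomputable def oneSidedGap (E F : Submodule 𝕜 V) : ℝ :=
  sSup ((fun e => infDist e (F : Set V)) '' {e : V | e ∈ E ∧ ‖e‖ = 1})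

section OneSidedGap

variable (E F : Submodule 𝕜 V)

theorem oneSidedGap_nonneg : 0 ≤ oneSidedGap E F :=
  Real.sSup_nonneg <| by rintro _ ⟨e, -, rfl⟩; exact infDist_nonneg

theorem oneSidedGap_le {δ : ℝ} (hδ : 0 ≤ δ) (h : ∀ x ∈ E, infDist x F ≤ δ * ‖x‖) :
    oneSidedGap E F ≤ δ :=
  Real.sSup_le (by rintro _ ⟨e, ⟨he, hnorm⟩, rfl⟩; simpa [hnorm] using h e he) hδ

theorem infDist_le_oneSidedGap_mul_norm [F.HasOrthogonalProjection] {x : V} (hx : x ∈ E) :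
    infDist x F ≤ oneSidedGap E F * ‖x‖ := by
  obtain rfl | hx0 := eq_or_ne x 0
  · simp [infDist_zero_of_mem F.zero_mem]
  have hbdd : BddAbove ((fun e => infDist e (F : Set V)) '' {e : V | e ∈ E ∧ ‖e‖ = 1}) := by
    refine ⟨1, ?_⟩
    rintro _ ⟨e, ⟨-, hnorm⟩, rfl⟩
    simpa [hnorm] using infDist_le_dist_of_mem (x := e) F.zero_mem
  have hunit : ((‖x‖ : 𝕜)⁻¹ • x) ∈ E ∧ ‖(‖x‖ : 𝕜)⁻¹ • x‖ = 1 :=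
    ⟨E.smul_mem _ hx, by simp [norm_smul, hx0]⟩
  have : infDist ((‖x‖ : 𝕜)⁻¹ • x) F ≤ oneSidedGap E F := le_csSup hbdd ⟨_, hunit, rfl⟩
  rw [F.infDist_smul, norm_inv, RCLike.norm_ofReal, abs_norm, inv_mul_le_iff₀ (by positivity)]
    at this
  rwa [mul_comm]

theorem one_sub_oneSidedGap_sq_mul_le [F.HasOrthogonalProjection] {x : V} (hx : x ∈ E) :
    (1 - oneSidedGap E F ^ 2) * ‖x‖ ^ 2 ≤ ‖F.starProjection x‖ ^ 2 := by
  have h := infDist_le_oneSidedGap_mul_norm E F hx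
  have := F.norm_sq_eq_norm_starProjection_sq_add_infDist_sq x
  nlinarith [infDist_nonneg (x := x) (s := F), oneSidedGap_nonneg E F]

theorem exists_mem_starProjection_eq_of_oneSidedGap_lt_one [FiniteDimensional 𝕜 E]
    [FiniteDimensional 𝕜 F] (hdim : Module.finrank 𝕜 E = Module.finrank 𝕜 F)
    (hgap : oneSidedGap E F < 1) {f : V} (hf : f ∈ F) :
    ∃ x ∈ E, F.starProjection x = f := by
  let T : E →ₗ[𝕜] F := (F.orthogonalProjectionOnto : V →ₗ[𝕜] F) ∘ₗ E.subtype
  have hT : Function.Injective T := by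
    rw [← LinearMap.ker_eq_bot, Submodule.eq_bot_iff]
    intro x hx
    have hproj : F.starProjection x = 0 := congr_arg Subtype.val (LinearMap.mem_ker.mp hx)
    have := one_sub_oneSidedGap_sq_mul_le E F x.2
    rw [hproj, norm_zero] at this
    have hpos : 0 < 1 - oneSidedGap E F ^ 2 := by nlinarith [oneSidedGap_nonneg E F]
    have : ‖(x : V)‖ ^ 2 ≤ 0 := by nlinarith
    simpa using this
  obtain ⟨x, hx⟩ := (LinearMap.injective_iff_surjective_of_finrank_eq_finrank hdim).mp hT ⟨f, hf⟩
  exact ⟨x, x.2, congr_arg Subtype.val hx⟩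

theorem norm_starProjection_sq_le_norm_starProjection_mul_norm [E.HasOrthogonalProjection]
    [F.HasOrthogonalProjection] {x : V} (hx : x ∈ E) :
    ‖F.starProjection x‖ ^ 2 ≤ ‖E.starProjection (F.starProjection x)‖ * ‖x‖ := by
  have hf : F.starProjection x ∈ F := F.starProjection_apply_mem x
  have hinner :
      (‖F.starProjection x‖ ^ 2 : 𝕜) = inner 𝕜 x (E.starProjection (F.starProjection x)) :=
    calc (‖F.starProjection x‖ ^ 2 : 𝕜)
        = inner 𝕜 (F.starProjection x) (F.starProjection x) := (inner_self_eq_norm_sq_to_K _).symm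
      _ = inner 𝕜 x (F.starProjection x) := by
        rw [inner_starProjection_left_eq_right, starProjection_eq_self_iff.mpr hf]
      _ = inner 𝕜 x (E.starProjection (F.starProjection x)) := by
        rw [← E.inner_starProjection_left_eq_right, starProjection_eq_self_iff.mpr hx]
  calc ‖F.starProjection x‖ ^ 2 = ‖(‖F.starProjection x‖ ^ 2 : 𝕜)‖ := by simp
    _ ≤ ‖E.starProjection (F.starProjection x)‖ * ‖x‖ := by
      rw [hinner, mul_comm]
      exact norm_inner_le_norm _ _

theorem oneSidedGap_le_oneSidedGap_of_finrank_eq [FiniteDimensional 𝕜 E]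
    [FiniteDimensional 𝕜 F] (hdim : Module.finrank 𝕜 E = Module.finrank 𝕜 F)
    (hgap : oneSidedGap E F < 1) :
    oneSidedGap F E ≤ oneSidedGap E F := by
  refine oneSidedGap_le F E (oneSidedGap_nonneg E F) fun f hf => ?_
  obtain ⟨x, hx, rfl⟩ := exists_mem_starProjection_eq_of_oneSidedGap_lt_one E F hdim hgap hf
  refine E.infDist_le_mul_norm_of_sq_le (oneSidedGap_nonneg E F) ?_
  set t := 1 - oneSidedGap E F ^ 2
  have ht : 0 ≤ t := by nlinarith [oneSidedGap_nonneg E F]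
  have hx_le : t * ‖x‖ ^ 2 ≤ ‖F.starProjection x‖ ^ 2 := one_sub_oneSidedGap_sq_mul_le E F hx
  have hf_le := norm_starProjection_sq_le_norm_starProjection_mul_norm E F hx
  obtain hf0 | hf0 := (norm_nonneg (F.starProjection x)).eq_or_lt
  · rw [← hf0, zero_pow two_ne_zero, mul_zero]
    positivity
  refine le_of_mul_le_mul_right ?_ (pow_pos hf0 2)
  calc t * ‖F.starProjection x‖ ^ 2 * ‖F.starProjection x‖ ^ 2
      = t * (‖F.starProjection x‖ ^ 2) ^ 2 := by ring
    _ ≤ t * (‖E.starProjection (F.starProjection x)‖ * ‖x‖) ^ 2 := by gcongr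
    _ = ‖E.starProjection (F.starProjection x)‖ ^ 2 * (t * ‖x‖ ^ 2) := by ring
    _ ≤ ‖E.starProjection (F.starProjection x)‖ ^ 2 * ‖F.starProjection x‖ ^ 2 := by gcongr

end OneSidedGap

end Submodule

theorem stmt7_general {V : Type*} [NormedAddCommGroup V] [InnerProductSpace ℂ V]
    (E Eh : Submodule ℂ V) (m : ℕ)
    [FiniteDimensional ℂ E] [FiniteDimensional ℂ Eh]
    (hdimE : Module.finrank ℂ E = m) (hdimEh : Module.finrank ℂ Eh = m)
    (δ₁ δ₂ : ℝ)
    (hδ₁ : δ₁ = sSup ((fun e => Metric.infDist e (Eh : Set V)) ''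
      {e : V | e ∈ E ∧ ‖e‖ = 1}))
    (hδ₂ : δ₂ = sSup ((fun e => Metric.infDist e (E : Set V)) ''
      {e : V | e ∈ Eh ∧ ‖e‖ = 1}))
    (h1 : δ₁ < 1) :
    max δ₁ δ₂ = δ₁ := by
  subst hδ₁ hδ₂
  exact max_eq_left <|
    Submodule.oneSidedGap_le_oneSidedGap_of_finrank_eq E Eh (hdimE.trans hdimEh.symm) h1

theorem stmt7 {V : Type*} [NormedAddCommGroup V] [InnerProductSpace ℂ V] [CompleteSpace V]
    (E Eh : Submodule ℂ V) (m : ℕ) (hm : 0 < m)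
    [FiniteDimensional ℂ E] [FiniteDimensional ℂ Eh]
    (hdimE : Module.finrank ℂ E = m) (hdimEh : Module.finrank ℂ Eh = m)
    (δ₁ δ₂ : ℝ)
    (hδ₁ : δ₁ = sSup ((fun e => Metric.infDist e (Eh : Set V)) ''
      {e : V | e ∈ E ∧ ‖e‖ = 1}))
    (hδ₂ : δ₂ = sSup ((fun e => Metric.infDist e (E : Set V)) ''
      {e : V | e ∈ Eh ∧ ‖e‖ = 1}))
    (h1 : δ₁ < 1) :
    max δ₁ δ₂ = δ₁ :=
  stmt7_general E Eh m hdimE hdimEh δ₁ δ₂ hδ₁ hδ₂ h1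
end

section
/- Let R be a bounded selfadjoint operator on a Hilbert space with ‖R‖ ≤ δ² < 1. Define T = (I−R)^{−1/2} − I via the convergent binomial series Σ_{n=1}^∞ binom(−1/2, n)(−R)^n. Then ‖T‖ ≤ ‖R‖ · [√(1−δ²) + (1−δ²)]^{−1}. -/
/-!
Up to sign, `binom(-1/2, n) = binom(n - 1/2, n)`, and these are the (nonnegative) Taylor
coefficients of `(1 - x)^(-1/2)` at `0`. Bounding the series for `T` termwise by
`|binom(-1/2, n)| ‖R‖ⁿ` therefore gives `‖T‖ ≤ (1 - ‖R‖)^(-1/2) - 1`, and with `u = 1 - ‖R‖`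
this equals `‖R‖ / (√u + u)`, which only grows when `u` decreases to `1 - δ²`.
-/

/-- The generalized binomial coefficient binom(−1/2, n). -/
noncomputable def binomHalf (n : ℕ) : ℝ :=
  (∏ i ∈ Finset.range n, (-(1 / 2 : ℝ) - i)) / n.factorial

open Finset

lemma ascPochhammer_eval_eq_prod_range {R : Type*} [CommSemiring R] (n : ℕ) (r : R) :
    (ascPochhammer R n).eval r = ∏ j ∈ range n, (r + j) := by
  induction n with
  | zero => simp
  | succ n ih => rw [ascPochhammer_succ_eval, ih, prod_range_succ]

lemma Ring.multichoose_eq_prod_range_div {𝕜 : Type*} [Field 𝕜] [CharZero 𝕜] (a : 𝕜) (n : ℕ) :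
    Ring.multichoose a n = (∏ j ∈ range n, (a + j)) / n.factorial := by
  have h := Ring.factorial_nsmul_multichoose_eq_ascPochhammer a n
  rw [Polynomial.ascPochhammer_smeval_eq_eval, ascPochhammer_eval_eq_prod_range,
    nsmul_eq_mul] at h
  rw [← h, mul_div_cancel_left₀ _ (by simpa using n.factorial_ne_zero)]

lemma abs_binomHalf (n : ℕ) : |binomHalf n| = Ring.choose ((1 / 2 : ℝ) + n - 1) n := by
  rw [← Ring.multichoose_eq, Ring.multichoose_eq_prod_range_div, binomHalf, abs_div, abs_prod,
    Nat.abs_cast]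
  congr 1
  refine prod_congr rfl fun j _ => ?_
  rw [← neg_add', abs_neg, abs_of_pos (by positivity)]

lemma hasSum_abs_binomHalf_mul_pow {x : ℝ} (hx : |x| < 1) :
    HasSum (fun n => |binomHalf n| * x ^ n) (√(1 - x))⁻¹ := by
  have h := (Real.one_div_one_sub_rpow_hasFPowerSeriesOnBall_zero (1 / 2)).hasSum
    (y := x) (by simpa [← ENNReal.ofReal_one, Metric.eball_ofReal] using hx)
  rw [FormalMultilinearSeries.ofScalars_apply_eq'] at h
  simpa [abs_binomHalf, Real.sqrt_eq_rpow] using h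

lemma inv_sqrt_one_sub_sub_one_le {x d : ℝ} (hx : 0 ≤ x) (hxd : x ≤ d) (hd : d < 1) :
    (√(1 - x))⁻¹ - 1 ≤ x * (√(1 - d) + (1 - d))⁻¹ := by
  have hu : 0 < √(1 - x) := Real.sqrt_pos.mpr (by linarith)
  have hsq : √(1 - x) ^ 2 = 1 - x := Real.sq_sqrt (by linarith)
  calc (√(1 - x))⁻¹ - 1 = x / (√(1 - x) + (1 - x)) := by
        rw [eq_div_iff (add_pos hu (by linarith)).ne']
        field_simp
        linear_combination -hsq
    _ ≤ x / (√(1 - d) + (1 - d)) := by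
        have : √(1 - d) ≤ √(1 - x) := Real.sqrt_le_sqrt (by linarith)
        gcongr
    _ = x * (√(1 - d) + (1 - d))⁻¹ := div_eq_mul_inv _ _

theorem stmt9_general {H : Type*} [NormedAddCommGroup H] [InnerProductSpace ℂ H]
    (R : H →L[ℂ] H) (δ : ℝ) (hR : ‖R‖ ≤ δ ^ 2) (hδ : δ ^ 2 < 1)
    (T : H →L[ℂ] H) (hT : T = ∑' n : ℕ, binomHalf (n + 1) • (-R) ^ (n + 1)) :
    ‖T‖ ≤ ‖R‖ * (Real.sqrt (1 - δ ^ 2) + (1 - δ ^ 2))⁻¹ := by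
  have hsum : HasSum (fun n => |binomHalf (n + 1)| * ‖R‖ ^ (n + 1)) ((√(1 - ‖R‖))⁻¹ - 1) := by
    have h := hasSum_abs_binomHalf_mul_pow (x := ‖R‖) (by rw [abs_norm]; exact hR.trans_lt hδ)
    simpa [binomHalf] using (hasSum_nat_add_iff' 1).mpr h
  have hterm (n : ℕ) :
      ‖binomHalf (n + 1) • (-R) ^ (n + 1)‖ ≤ |binomHalf (n + 1)| * ‖R‖ ^ (n + 1) := by
    rw [norm_smul, Real.norm_eq_abs, ← norm_neg R]
    exact mul_le_mul_of_nonneg_left (norm_pow_le' _ n.succ_pos) (abs_nonneg _)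
  rw [hT]
  exact (tsum_of_norm_bounded hsum hterm).trans
    (inv_sqrt_one_sub_sub_one_le (norm_nonneg R) hR hδ)

theorem stmt9 {H : Type*} [NormedAddCommGroup H] [InnerProductSpace ℂ H] [CompleteSpace H]
    (R : H →L[ℂ] H) (hsa : IsSelfAdjoint R) (δ : ℝ) (hR : ‖R‖ ≤ δ ^ 2) (hδ : δ ^ 2 < 1)
    (T : H →L[ℂ] H) (hT : T = ∑' n : ℕ, binomHalf (n + 1) • (-R) ^ (n + 1)) :
    ‖T‖ ≤ ‖R‖ * (Real.sqrt (1 - δ ^ 2) + (1 - δ ^ 2))⁻¹ :=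
  stmt9_general R δ hR hδ T hT
end

section
/- Let S and Q be orthogonal projections on a Hilbert space ℋ with ‖S − Q‖ < 1, and set R = (S−Q)². Then the operator J = (I−R)^{−1/2}[QS + (I−Q)(I−S)] is a unitary operator on ℋ mapping ran(S) bijectively onto ran(Q), with inverse J⁻¹ = J* = [SQ + (I−S)(I−Q)](I−R)^{−1/2}. -/
/-!
The coefficients `b n = binom(-1/2, n)` satisfy `∑_{i+j=n} b i * b j = binom(-1, n) = (-1)^n`
(Chu–Vandermonde), so for `‖R‖ < 1` the series `s = ∑ b n • (-R)^n` squares to the Neumann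
series `∑ R^n = (1 - R)⁻¹`. For `A = QS + (1-Q)(1-S)` one computes `A⋆A = AA⋆ = 1 - R` and
`AS = QA`; `R` commutes with `Q` and `A`, hence so does `s`, and `J = sA` is unitary with
`JS = QJ`.
-/

open Finset

open Polynomial in
theorem binomHalf_eq_choose (n : ℕ) : binomHalf n = Ring.choose (-(1 / 2) : ℝ) n := by
  rw [Ring.choose_eq_smul, ← aeval_eq_smeval, aeval_def, eval₂_eq_eval_map, descPochhammer_map,
    descPochhammer_eval_eq_prod_range, binomHalf, smul_eq_mul, div_eq_inv_mul]

theorem sum_antidiagonal_binomHalf_mul (n : ℕ) :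
    ∑ ij ∈ antidiagonal n, binomHalf ij.1 * binomHalf ij.2 = (-1) ^ n := by
  have vandermonde := Ring.add_choose_eq (r := (-(1 / 2) : ℝ)) (s := -(1 / 2)) n (.refl _)
  simp only [← binomHalf_eq_choose] at vandermonde
  rw [← vandermonde, show (-(1 / 2) + -(1 / 2) : ℝ) = -(1 : ℕ) by norm_num, Ring.choose_neg]
  simp [Ring.choose_natCast, Units.smul_def]

theorem abs_binomHalf_le_one (n : ℕ) : |binomHalf n| ≤ 1 := by
  have hfact : (0 : ℝ) < n.factorial := by positivity
  rw [binomHalf, abs_div, abs_of_pos hfact, div_le_one hfact, abs_prod,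
    ← prod_range_add_one_eq_factorial, Nat.cast_prod]
  refine prod_le_prod (fun i _ => abs_nonneg _) fun i _ => ?_
  rw [abs_of_nonpos (by linarith [i.cast_nonneg (α := ℝ)])]
  push_cast
  linarith

section InvSqrtOneSub

variable {A : Type*}

noncomputable def invSqrtOneSub [Ring A] [Algebra ℝ A] [TopologicalSpace A] (a : A) : A :=
  ∑' n : ℕ, binomHalf n • (-a) ^ n

theorem Commute.invSqrtOneSub_left [Ring A] [Algebra ℝ A] [TopologicalSpace A] [T2Space A]
    [IsTopologicalRing A] {a b : A} (h : Commute a b) : Commute (invSqrtOneSub a) b :=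
  .tsum_left b fun n => (h.neg_left.pow_left n).smul_left _

theorem IsSelfAdjoint.invSqrtOneSub [Ring A] [Algebra ℝ A] [TopologicalSpace A] [T2Space A]
    [StarRing A] [StarModule ℝ A] [ContinuousStar A] {a : A} (ha : IsSelfAdjoint a) :
    IsSelfAdjoint (invSqrtOneSub a) := by
  rw [IsSelfAdjoint, _root_.invSqrtOneSub, tsum_star]
  exact tsum_congr fun n => by rw [star_smul, star_pow, star_neg, ha.star_eq, star_trivial]

variable [NormedRing A] [NormedAlgebra ℝ A]

theorem summable_norm_binomHalf_smul_pow {a : A} (ha : ‖a‖ < 1) :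
    Summable fun n : ℕ => ‖binomHalf n • a ^ n‖ :=
  .of_nonneg_of_le (fun _ => norm_nonneg _)
    (fun n => (norm_smul_le _ _).trans <| by
      simpa using mul_le_of_le_one_left (norm_nonneg (a ^ n)) (abs_binomHalf_le_one n))
    (summable_norm_geometric_of_norm_lt_one ha)

variable [CompleteSpace A]

theorem invSqrtOneSub_mul_self {a : A} (ha : ‖a‖ < 1) :
    invSqrtOneSub a * invSqrtOneSub a = ∑' n : ℕ, a ^ n := by
  have hsum := summable_norm_binomHalf_smul_pow (a := -a) (by rwa [norm_neg])
  rw [invSqrtOneSub, tsum_mul_tsum_eq_tsum_sum_antidiagonal_of_summable_norm hsum hsum]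
  refine tsum_congr fun n => ?_
  calc ∑ ij ∈ antidiagonal n, binomHalf ij.1 • (-a) ^ ij.1 * binomHalf ij.2 • (-a) ^ ij.2
      = (∑ ij ∈ antidiagonal n, binomHalf ij.1 * binomHalf ij.2) • (-a) ^ n := by
        rw [sum_smul]
        refine sum_congr rfl fun ij hij => ?_
        rw [smul_mul_smul_comm, ← pow_add, mem_antidiagonal.mp hij]
    _ = a ^ n := by
        rw [sum_antidiagonal_binomHalf_mul, ← smul_pow, neg_one_smul, neg_neg]

theorem invSqrtOneSub_mul_self_mul_one_sub {a : A} (ha : ‖a‖ < 1) :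
    invSqrtOneSub a * invSqrtOneSub a * (1 - a) = 1 := by
  rw [invSqrtOneSub_mul_self ha, geom_series_mul_neg a ha]

end InvSqrtOneSub

theorem IsSelfAdjoint.mul_mem_unitary {M : Type*} [Monoid M] [StarMul M] {s a : M}
    (hs : IsSelfAdjoint s) (hsa : Commute s a) (ha : star a * a = a * star a)
    (hinv : s * s * (star a * a) = 1) : s * a ∈ unitary M := by
  have hsa' : Commute s (star a) := by simpa [hs.star_eq] using hsa.star_star
  have hinv' : star a * a * (s * s) = 1 := by
    rwa [((hsa'.mul_right hsa).mul_left (hsa'.mul_right hsa)).eq] at hinv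
  constructor
  · rw [star_mul, hs.star_eq, mul_assoc, ← mul_assoc s, (hsa.mul_left hsa).eq, ← mul_assoc,
      hinv']
  · rw [star_mul, hs.star_eq, ← mul_assoc, mul_assoc s a, ← ha, (hsa'.mul_right hsa).eq,
      mul_assoc, hinv']

theorem Function.Semiconj.image_range_eq {α β : Type*} {f : α → β} {p : α → α}
    {q : β → β} (h : Semiconj f p q) (hf : Surjective f) : f '' Set.range p = Set.range q := by
  rw [← Set.range_comp, h.comp_eq, Set.range_comp, hf.range_eq, Set.image_univ]

section ProjTransfer

variable {R : Type*} [Ring R] {p q : R}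

def projTransfer (q p : R) : R := q * p + (1 - q) * (1 - p)

theorem sub_sq_of_isIdempotentElem (hp : IsIdempotentElem p) (hq : IsIdempotentElem q) :
    (p - q) ^ 2 = p - p * q - q * p + q := by
  rw [sq, mul_sub, sub_mul, sub_mul, hp.eq, hq.eq]
  abel

theorem projTransfer_mul_projTransfer (hp : IsIdempotentElem p) (hq : IsIdempotentElem q) :
    projTransfer p q * projTransfer q p = 1 - (p - q) ^ 2 := by
  have hq' : ∀ x : R, q * (q * x) = q * x := fun x => by rw [← mul_assoc, hq.eq]
  rw [sub_sq_of_isIdempotentElem hp hq, projTransfer, projTransfer]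
  simp only [mul_add, add_mul, mul_sub, sub_mul, mul_one, one_mul, mul_assoc, hp.eq, hq.eq, hq']
  abel

theorem projTransfer_mul_eq_mul_projTransfer (hp : IsIdempotentElem p)
    (hq : IsIdempotentElem q) : projTransfer q p * p = q * projTransfer q p := by
  simp only [projTransfer, add_mul, mul_add, mul_assoc, sub_mul, mul_sub, one_mul, mul_one, hp.eq,
    ← mul_assoc q q, hq.eq]
  abel

theorem commute_sub_sq_right (hp : IsIdempotentElem p) (hq : IsIdempotentElem q) :
    Commute ((p - q) ^ 2) q := by
  rw [Commute, SemiconjBy, sub_sq_of_isIdempotentElem hp hq]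
  simp only [add_mul, mul_add, mul_assoc, sub_mul, mul_sub, hq.eq, ← mul_assoc q q]
  abel

theorem commute_sub_sq_projTransfer (hp : IsIdempotentElem p) (hq : IsIdempotentElem q) :
    Commute ((p - q) ^ 2) (projTransfer q p) := by
  have h := mul_assoc (projTransfer q p) (projTransfer p q) (projTransfer q p)
  rw [projTransfer_mul_projTransfer hp hq, projTransfer_mul_projTransfer hq hp,
    ← neg_sub p q, neg_sq, mul_sub, sub_mul, mul_one, one_mul, sub_right_inj] at h
  exact h

theorem star_projTransfer [StarRing R] (hp : IsSelfAdjoint p) (hq : IsSelfAdjoint q) :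
    star (projTransfer q p) = projTransfer p q := by
  simp [projTransfer, hp.star_eq, hq.star_eq]

end ProjTransfer

theorem stmt10 {H : Type*} [NormedAddCommGroup H] [InnerProductSpace ℂ H] [CompleteSpace H]
    (S Q : H →L[ℂ] H) (hSsa : IsSelfAdjoint S) (hQsa : IsSelfAdjoint Q)
    (hS2 : S * S = S) (hQ2 : Q * Q = Q) (hSQ : ‖S - Q‖ < 1)
    (R isr J Ji : H →L[ℂ] H)
    (hR : R = (S - Q) ^ 2)
    (hisr : isr = ∑' n : ℕ, binomHalf n • (-R) ^ n)   -- (I−R)^{−1/2}, binomial series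
    (hJ : J = isr * (Q * S + (1 - Q) * (1 - S)))
    (hJi : Ji = (S * Q + (1 - S) * (1 - Q)) * isr) :
    J * Ji = 1 ∧ Ji * J = 1 ∧ Ji = ContinuousLinearMap.adjoint J ∧
      (∀ x : H, ‖J x‖ = ‖x‖) ∧
      (fun x => J x) '' (LinearMap.range (S : H →ₗ[ℂ] H) : Set H) = (LinearMap.range (Q : H →ₗ[ℂ] H) : Set H) := by
  have hRlt : ‖R‖ < 1 :=
    hR ▸ (norm_pow_le' _ two_pos).trans_lt (pow_lt_one₀ (norm_nonneg _) hSQ two_ne_zero)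
  replace hisr : isr = invSqrtOneSub R := hisr
  have hisr_sa : IsSelfAdjoint isr :=
    hisr ▸ (hR ▸ (hSsa.sub hQsa).pow 2 : IsSelfAdjoint R).invSqrtOneSub
  have hisr_comm {T} (h : Commute ((S - Q) ^ 2) T) : Commute isr T :=
    hisr ▸ hR ▸ h.invSqrtOneSub_left
  replace hJ : J = isr * projTransfer Q S := hJ
  obtain rfl : Ji = star J := by
    rw [hJi, hJ, star_mul, hisr_sa.star_eq, star_projTransfer hSsa hQsa]; rfl
  have hJu : J ∈ unitary (H →L[ℂ] H) := by
    rw [hJ]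
    refine hisr_sa.mul_mem_unitary (hisr_comm (commute_sub_sq_projTransfer hS2 hQ2)) ?_ ?_ <;>
      rw [star_projTransfer hSsa hQsa, projTransfer_mul_projTransfer hS2 hQ2]
    · rw [projTransfer_mul_projTransfer hQ2 hS2, ← neg_sub S Q, neg_sq]
    · rw [← hR, hisr]
      exact invSqrtOneSub_mul_self_mul_one_sub hRlt
  have hJS : J * S = Q * J := by
    rw [hJ, mul_assoc, projTransfer_mul_eq_mul_projTransfer hS2 hQ2, ← mul_assoc, ← mul_assoc,
      (hisr_comm (commute_sub_sq_right hS2 hQ2)).eq]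
  have hJsurj : Function.Surjective J := fun y =>
    ⟨star J y, congr($(Unitary.mul_star_self_of_mem hJu) y)⟩
  exact ⟨Unitary.mul_star_self_of_mem hJu, Unitary.star_mul_self_of_mem hJu, J.star_eq_adjoint,
    J.norm_map_of_mem_unitary hJu,
    Function.Semiconj.image_range_eq (fun x => congr($hJS x)) hJsurj⟩
end
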